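/- arXiv:2102.10173 — 2 statements merged into one kernel-verified Lean document; each statement's English description precedes it below -/
import Mathlib

section
/- Let (b₀,b₁,…) be a sequence of integers such that p⁽ⁿ⁾ does not tend to ∞ and q⁽ⁿ⁾ does not tend to ∞. Then the continued fraction [b₀,b₁,…] diverges, i.e., its sequence of convergents does not converge in ℝ∞. -/
open Filter Topology OnePoint

/-- The Möbius map `z ↦ b - 1/z` on the one-point compactification `ℝ∞` of `ℝ`. -/
noncomputable def mob (b : ℤ) (z : OnePoint ℝ) : OnePoint ℝ :=
  Option.elim z ((b : ℝ) : OnePoint ℝ)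
    (fun x => if x = 0 then (∞ : OnePoint ℝ) else (((b : ℝ) - 1 / x : ℝ) : OnePoint ℝ))

/-- Value of a finite continued fraction `[b₀, …, b_m]`, i.e. `s₀(s₁(⋯ s_m(∞)))`. -/
noncomputable def cfVal : List ℤ → OnePoint ℝ
  | [] => ∞
  | b :: t => mob b (cfVal t)

/-- The `n`th convergent `v_n = S_n(∞)` of the continued fraction `[b₀, b₁, …]`. -/
noncomputable def cfConv (b : ℕ → ℤ) (n : ℕ) : OnePoint ℝ :=
  cfVal ((List.range (n + 1)).map b)

/-- `m` is a positive index at which the coefficient is `0`, `1` or `-1`. -/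
def badIdx (b : ℕ → ℤ) (m : ℕ) : Prop :=
  1 ≤ m ∧ (b m = 0 ∨ b m = 1 ∨ b m = -1)

instance (b : ℕ → ℤ) : DecidablePred (badIdx b) := fun m => by
  unfold badIdx; infer_instance

-- The singularization map `Φ` on integer sequences.
open Classical in
noncomputable def Phi (b : ℕ → ℤ) : ℕ → ℤ :=
  if h : ∃ m, badIdx b m then
    let m := Nat.find h
    if b m = 0 then
      fun k => if k + 1 < m then b k
        else if k = m - 1 then b (m - 1) + b (m + 1)
        else b (k + 2)
    else if b m = 1 then
      fun k => if k + 1 < m then b k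
        else if k = m - 1 then b (m - 1) - 1
        else if k = m then b (m + 1) - 1
        else b (k + 1)
    else
      fun k => if k + 1 < m then b k
        else if k = m - 1 then b (m - 1) + 1
        else if k = m then b (m + 1) + 1
        else b (k + 1)
  else b

-- `p(b) ∈ ℕ ∪ {∞}`: the least positive index at which `0`, `1` or `-1` occurs.
open Classical in
noncomputable def pIdx (b : ℕ → ℤ) : ℕ∞ :=
  if h : ∃ m, badIdx b m then (Nat.find h : ℕ∞) else ⊤

/-- `p⁽ⁿ⁾ → ∞` as `n → ∞`. -/
def PTendsToTop (b : ℕ → ℤ) : Prop :=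
  ∀ N : ℕ, ∃ M : ℕ, ∀ n ≥ M, (N : ℕ∞) < pIdx (Phi^[n] b)

/-- `p = liminf pⁿ`, as a natural number (junk value if the liminf is `∞`). -/
noncomputable def pLim (b : ℕ → ℤ) : ℕ :=
  (Filter.liminf (fun n => pIdx (Phi^[n] b)) Filter.atTop).toNat

/-- `q⁽ⁿ⁾ = |b⁽ⁿ⁾_{p-1}|`. -/
noncomputable def qSeq (b : ℕ → ℤ) (n : ℕ) : ℕ :=
  ((Phi^[n] b) (pLim b - 1)).natAbs

/-- Two continued fractions have the same tail. -/
def SameTail (b c : ℕ → ℤ) : Prop := ∃ r s : ℕ, ∀ k : ℕ, b (r + k) = c (s + k)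

/-- `bstar` is the limit continued fraction: each coefficient of `Φⁿ(b)` stabilises on it. -/
def EventuallyCoeff (b bstar : ℕ → ℤ) : Prop :=
  ∀ k : ℕ, ∃ N : ℕ, ∀ n ≥ N, Phi^[n] b k = bstar k

/-- The point of `ℝ∞` represented by the integer fraction `a/b` (`∞` when `b = 0`). -/
noncomputable def intPt (a b : ℤ) : OnePoint ℝ :=
  if b = 0 then ∞ else (((a : ℝ) / (b : ℝ)) : OnePoint ℝ)

/-- Adjacency in the Farey graph: `x = a/b`, `y = c/d` with `ad - bc = ±1`. -/
def FareyAdj (x y : OnePoint ℝ) : Prop :=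
  ∃ a b c d : ℤ, x = intPt a b ∧ y = intPt c d ∧
    (a * d - b * c = 1 ∨ a * d - b * c = -1)

/-- `x` is an extended rational, i.e. a member of `ℚ∞ = ℚ ∪ {∞} ⊆ ℝ∞`. -/
def IsExtRat (x : OnePoint ℝ) : Prop :=
  x = ∞ ∨ ∃ q : ℚ, x = ((q : ℝ) : OnePoint ℝ)

-- One step of the index-tracking sequence, for the current coefficient sequence `c`.
open Classical in
noncomputable def eStep (c : ℕ → ℤ) (e : ℕ) : Option ℕ :=
  if h : ∃ m, badIdx c m then
    let m := Nat.find h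
    if c m = 0 then
      if e + 2 ≤ m then Option.some e
      else if e = m - 1 ∨ e = m then (none : Option ℕ)
      else Option.some (e - 2)
    else
      if e + 2 ≤ m then Option.some e
      else if e = m - 1 then (none : Option ℕ)
      else Option.some (e - 1)
  else Option.some e

/-- The index-tracking sequence `e⁽⁰⁾(k), e⁽¹⁾(k), …` (`none` once it has terminated). -/
noncomputable def eSeq (b : ℕ → ℤ) (k : ℕ) : ℕ → Option ℕ
  | 0 => Option.some k
  | n + 1 => (eSeq b k n).bind (eStep (Phi^[n] b))

/-!
Write `S_n = s₀ ∘ ⋯ ∘ s_{n-1}`. The identities `s_a ∘ s_0 = (· + a)` and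
`s_a ∘ s_ε = s_{a-ε} ∘ (· - ε)` for `ε = ±1` show that every convergent of `Φ(b)` is a
convergent of `b` of at least the same index; when `Φ` acts at a position `m ≤ j + 1`, the `j`th
convergent of `Φ(b)` is a strictly later convergent of `b`.

Let `p = liminf p⁽ⁿ⁾ < ∞`. Eventually `p⁽ⁿ⁾ ≥ p`, so the coefficients before position `p - 1`
freeze into a fixed map `S`, and the coefficient at `p - 1` changes only at the infinitely many
times with `p⁽ⁿ⁾ = p`. As `q⁽ⁿ⁾ ↛ ∞`, at infinitely many of those times the pair
`(b⁽ⁿ⁾_{p-1}, b⁽ⁿ⁾_p)` takes one and the same value `(v, ε)` with `ε ∈ {0, ±1}`. Then the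
convergents `p - 1` and `p` of `Φⁿ(b)` are `S(s_v(∞))` and `S(s_v(ε))`, and they are convergents
of `b` whose indices tend to `∞`. A limit of the convergents of `b` would equal both, but `S ∘ s_v`
is injective and `ε ≠ ∞`.
-/

section Liminf

variable {ι : Type*} {l : Filter ι} {u : ι → ℕ∞} {p : ℕ}

lemma eventually_le_of_liminf_eq_natCast (h : liminf u l = p) : ∀ᶠ i in l, (p : ℕ∞) ≤ u i := by
  cases p with
  | zero => simp
  | succ q =>
    have hq : (q : ℕ∞) < liminf u l := by rw [h]; exact_mod_cast q.lt_succ_self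
    filter_upwards [eventually_lt_of_lt_liminf hq] with i hi
    exact_mod_cast ENat.natCast_add_one_le_iff.mpr hi

lemma frequently_eq_of_liminf_eq_natCast (h : liminf u l = p) : ∃ᶠ i in l, u i = p := by
  by_contra hne
  have hgt : ∀ᶠ i in l, ((p + 1 : ℕ) : ℕ∞) ≤ u i := by
    filter_upwards [not_frequently.mp hne, eventually_le_of_liminf_eq_natCast h] with i h1 h2
    exact_mod_cast ENat.natCast_add_one_le_iff.mpr (lt_of_le_of_ne h2 (Ne.symm h1))
  have := le_liminf_of_le (by isBoundedDefault) hgt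
  rw [h, Nat.cast_le] at this
  omega

end Liminf

lemma tendsto_atTop_of_monotone_of_frequently_lt_succ {u : ℕ → ℕ} (hu : Monotone u)
    (h : ∃ᶠ t in atTop, u t < u (t + 1)) : Tendsto u atTop atTop := by
  refine tendsto_atTop_atTop_of_monotone hu fun K => ?_
  induction K with
  | zero => exact ⟨0, Nat.zero_le _⟩
  | succ K ih =>
    obtain ⟨t, ht⟩ := ih
    obtain ⟨s, hts, hs⟩ := h.forall_exists_of_atTop t
    exact ⟨s + 1, by have := hu hts; omega⟩

lemma frequently_and_of_eq_succ_of_not {α : Type*} {S : ℕ → Prop} {c : ℕ → α} {B : α → Prop}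
    (hS : ∃ᶠ n in atTop, S n) (hc : ∀ᶠ n in atTop, ¬ S n → c (n + 1) = c n)
    (hB : ∃ᶠ n in atTop, B (c n)) : ∃ᶠ n in atTop, S n ∧ B (c n) := by
  classical
  refine frequently_atTop.mpr fun M => ?_
  obtain ⟨N, hN⟩ := eventually_atTop.mp hc
  obtain ⟨n, hn, hBn⟩ := hB.forall_exists_of_atTop (max M N)
  have hex : ∃ s, n ≤ s ∧ S s := hS.forall_exists_of_atTop n
  obtain ⟨hns, hSs⟩ := Nat.find_spec hex
  have hconst : ∀ s, n ≤ s → s ≤ Nat.find hex → c s = c n := by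
    intro s hs
    induction s, hs using Nat.le_induction with
    | base => exact fun _ => rfl
    | succ s hs ih =>
      intro hs'
      rw [hN s (by omega) fun hSs => Nat.find_min hex (by omega) ⟨hs, hSs⟩, ih (by omega)]
  exact ⟨Nat.find hex, by omega, hSs, hconst _ hns le_rfl ▸ hBn⟩

lemma mob_infty (a : ℤ) : mob a ∞ = ((a : ℝ) : OnePoint ℝ) := rfl

lemma mob_coe (a : ℤ) (x : ℝ) :
    mob a x = if x = 0 then ∞ else (((a : ℝ) - 1 / x : ℝ) : OnePoint ℝ) := rfl

noncomputable def addPt (t : ℤ) (z : OnePoint ℝ) : OnePoint ℝ :=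
  Option.elim z ∞ (fun x => ((x + t : ℝ) : OnePoint ℝ))

lemma addPt_infty (t : ℤ) : addPt t ∞ = ∞ := rfl

lemma addPt_coe (t : ℤ) (x : ℝ) : addPt t x = ((x + t : ℝ) : OnePoint ℝ) := rfl

lemma addPt_zero (z : OnePoint ℝ) : addPt 0 z = z := by
  induction z using OnePoint.rec
  · rfl
  · simp [addPt_coe]

lemma addPt_mob (t c : ℤ) (z : OnePoint ℝ) : addPt t (mob c z) = mob (c + t) z := by
  induction z using OnePoint.rec with
  | infty => simp only [mob_infty, addPt_coe]; push_cast; rfl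
  | coe x =>
    simp only [mob_coe]
    split_ifs
    · rfl
    · rw [addPt_coe, OnePoint.coe_eq_coe]; push_cast; ring

lemma mob_mob_zero (a : ℤ) (z : OnePoint ℝ) : mob a (mob 0 z) = addPt a z := by
  induction z using OnePoint.rec with
  | infty => simp [mob_infty, mob_coe, addPt_infty]
  | coe x =>
    by_cases hx : x = 0
    · simp [hx, mob_coe, mob_infty, addPt_coe]
    · have hx' : (0 : ℝ) - 1 / x ≠ 0 := by simpa using hx
      simp only [mob_coe, if_neg hx, Int.cast_zero, if_neg hx', addPt_coe,
        OnePoint.coe_eq_coe]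
      field_simp
      ring

lemma mob_mob_of_isUnit (a ε : ℤ) (hε : IsUnit ε) (z : OnePoint ℝ) :
    mob a (mob ε z) = mob (a - ε) (addPt (-ε) z) := by
  replace hε := Int.isUnit_iff.mp hε
  induction z using OnePoint.rec with
  | infty => rcases hε with rfl | rfl <;> simp [mob_infty, addPt_infty, mob_coe]
  | coe x =>
    by_cases hx : x = 0
    · rcases hε with rfl | rfl <;> simp [hx, mob_coe, mob_infty, addPt_coe]
    by_cases hxε : x = ε
    · rcases hε with rfl | rfl <;> simp [hxε, mob_coe, addPt_coe]
    have hεε : (ε : ℝ) * ε = 1 := by rcases hε with rfl | rfl <;> norm_num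
    have h1 : (ε : ℝ) - 1 / x ≠ 0 := by
      intro h; apply hxε; field_simp at h; linear_combination ε * h - x * hεε
    have h2 : x + ((-ε : ℤ) : ℝ) ≠ 0 := by push_cast; intro h; exact hxε (by linarith)
    rw [mob_coe, if_neg hx, mob_coe, if_neg h1, addPt_coe, mob_coe, if_neg h2,
      OnePoint.coe_eq_coe]
    push_cast at h2 ⊢
    have h3 : (ε : ℝ) * x - 1 ≠ 0 := by
      intro h; apply h1; field_simp; linarith
    field_simp
    linear_combination (x ^ 2 - ε * x + 1) * hεε

lemma mob_injective (a : ℤ) : Function.Injective (mob a) := by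
  refine Function.LeftInverse.injective (g := fun z => mob 0 (addPt (-a) z)) fun z => ?_
  simp only [addPt_mob, add_neg_cancel, mob_mob_zero, addPt_zero]

noncomputable def mobComp (f : ℕ → ℤ) : ℕ → OnePoint ℝ → OnePoint ℝ
  | 0, z => z
  | n + 1, z => mob (f 0) (mobComp (fun i => f (i + 1)) n z)

lemma mobComp_add (f : ℕ → ℤ) (n k : ℕ) (z : OnePoint ℝ) :
    mobComp f (n + k) z = mobComp f n (mobComp (fun i => f (n + i)) k z) := by
  induction n generalizing f with
  | zero => simp [mobComp]
  | succ n ih =>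
    rw [Nat.add_right_comm, mobComp, ih, mobComp]
    simp only [Nat.add_right_comm _ 1]

lemma mobComp_succ_right (f : ℕ → ℤ) (n : ℕ) (z : OnePoint ℝ) :
    mobComp f (n + 1) z = mobComp f n (mob (f n) z) := by
  rw [mobComp_add]; rfl

lemma mobComp_congr {f g : ℕ → ℤ} {n : ℕ} (h : ∀ k < n, f k = g k) (z : OnePoint ℝ) :
    mobComp f n z = mobComp g n z := by
  induction n generalizing f g with
  | zero => rfl
  | succ n ih =>
    rw [mobComp, mobComp, h 0 n.succ_pos, ih fun k hk => h (k + 1) (by omega)]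

lemma mobComp_injective (f : ℕ → ℤ) (n : ℕ) : Function.Injective (mobComp f n) := by
  induction n generalizing f with
  | zero => exact fun _ _ h => h
  | succ n ih => exact fun _ _ h => ih _ (mob_injective _ h)

lemma cfConv_eq_mobComp (f : ℕ → ℤ) (j : ℕ) : cfConv f j = mobComp f (j + 1) ∞ := by
  rw [cfConv]
  generalize j + 1 = n
  induction n generalizing f with
  | zero => rfl
  | succ n ih => rw [List.range_succ_eq_map, List.map_cons, List.map_map, cfVal, mobComp, ← ih]; rfl

section Phi

variable {f : ℕ → ℤ}

lemma Phi_of_not_exists_badIdx (h : ¬ ∃ m, badIdx f m) : Phi f = f := by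
  rw [Phi, dif_neg h]

lemma pIdx_of_exists_badIdx (h : ∃ m, badIdx f m) : pIdx f = Nat.find h := by
  rw [pIdx, dif_pos h]

lemma pIdx_of_not_exists_badIdx (h : ¬ ∃ m, badIdx f m) : pIdx f = ⊤ := by
  rw [pIdx, dif_neg h]

lemma one_le_pIdx (f : ℕ → ℤ) : 1 ≤ pIdx f := by
  by_cases h : ∃ m, badIdx f m
  · rw [pIdx_of_exists_badIdx h]; exact_mod_cast (Nat.find_spec h).1
  · rw [pIdx_of_not_exists_badIdx h]; exact le_top

lemma badIdx_of_pIdx_eq {n : ℕ} (h : pIdx f = n) : badIdx f n := by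
  by_cases hb : ∃ m, badIdx f m
  · rw [pIdx_of_exists_badIdx hb, Nat.cast_inj] at h
    exact h ▸ Nat.find_spec hb
  · simp [pIdx_of_not_exists_badIdx hb] at h

variable (h : ∃ m, badIdx f m)

lemma Phi_apply_of_lt_find {k : ℕ} (hk : k + 1 < Nat.find h) : Phi f k = f k := by
  simp only [Phi, ite_apply, dif_pos h]
  split_ifs <;> rfl

lemma Phi_apply_pred_of_zero (h0 : f (Nat.find h) = 0) :
    Phi f (Nat.find h - 1) = f (Nat.find h - 1) + f (Nat.find h + 1) := by
  simp only [Phi, dif_pos h, if_pos h0]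
  split_ifs <;> omega

lemma Phi_apply_add_of_zero (h0 : f (Nat.find h) = 0) (i : ℕ) :
    Phi f (Nat.find h + i) = f (Nat.find h + i + 2) := by
  have := (Nat.find_spec h).1
  simp only [Phi, dif_pos h, if_pos h0]
  split_ifs <;> omega

lemma Phi_apply_pred_of_ne_zero (h0 : f (Nat.find h) ≠ 0) :
    Phi f (Nat.find h - 1) = f (Nat.find h - 1) - f (Nat.find h) := by
  obtain ⟨hm1, hm⟩ := Nat.find_spec h
  simp only [Phi, ite_apply, dif_pos h, if_neg h0]
  split_ifs <;> omega

lemma Phi_apply_find_of_ne_zero (h0 : f (Nat.find h) ≠ 0) :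
    Phi f (Nat.find h) = f (Nat.find h + 1) - f (Nat.find h) := by
  obtain ⟨hm1, hm⟩ := Nat.find_spec h
  simp only [Phi, ite_apply, dif_pos h, if_neg h0]
  split_ifs <;> omega

lemma Phi_apply_add_of_ne_zero (h0 : f (Nat.find h) ≠ 0) (i : ℕ) :
    Phi f (Nat.find h + 1 + i) = f (Nat.find h + 1 + i + 1) := by
  simp only [Phi, ite_apply, dif_pos h, if_neg h0]
  split_ifs <;> omega

end Phi

lemma Phi_apply_of_le_pIdx {f : ℕ → ℤ} {k : ℕ} (hk : ((k + 2 : ℕ) : ℕ∞) ≤ pIdx f) :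
    Phi f k = f k := by
  by_cases h : ∃ m, badIdx f m
  · rw [pIdx_of_exists_badIdx h, Nat.cast_le] at hk
    exact Phi_apply_of_lt_find h (by omega)
  · rw [Phi_of_not_exists_badIdx h]

section Singularization

variable {f : ℕ → ℤ} (h : ∃ m, badIdx f m)

lemma mobComp_Phi_of_lt_find {n : ℕ} (hn : n + 1 ≤ Nat.find h) (z : OnePoint ℝ) :
    mobComp (Phi f) n z = mobComp f n z :=
  mobComp_congr (fun _ hk => Phi_apply_of_lt_find h (by omega)) z

lemma mobComp_Phi_of_zero (h0 : f (Nat.find h) = 0) (d : ℕ) (z : OnePoint ℝ) :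
    mobComp (Phi f) (Nat.find h + d) z = mobComp f (Nat.find h + 2 + d) z := by
  obtain ⟨m, hm⟩ : ∃ m, Nat.find h = m + 1 :=
    ⟨Nat.find h - 1, by have := (Nat.find_spec h).1; omega⟩
  have hpred : Phi f m = f m + f (m + 2) := by
    simpa [hm] using Phi_apply_pred_of_zero h h0
  have htail : (fun i => Phi f (m + (i + 1))) = fun i => f (m + (i + 1 + 1 + 1)) := by
    funext i
    rw [show m + (i + 1) = Nat.find h + i by omega, Phi_apply_add_of_zero h h0]
    congr 1
    omega
  rw [hm] at h0 ⊢
  rw [show m + 1 + d = m + (d + 1) by omega, show m + 1 + 2 + d = m + (d + 3) by omega,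
    mobComp_add _ m, mobComp_add _ m, mobComp_Phi_of_lt_find h (by omega)]
  congr 1
  simp only [mobComp, Nat.add_zero, Nat.zero_add, htail, hpred, h0, mob_mob_zero, addPt_mob,
    add_comm (f m)]

lemma mobComp_Phi_infty_of_ne_zero (h0 : f (Nat.find h) ≠ 0) :
    mobComp (Phi f) (Nat.find h) ∞ = mobComp f (Nat.find h + 1) ∞ := by
  have hε : IsUnit (f (Nat.find h)) :=
    Int.isUnit_iff.mpr ((Nat.find_spec h).2.resolve_left h0)
  obtain ⟨m, hm⟩ : ∃ m, Nat.find h = m + 1 :=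
    ⟨Nat.find h - 1, by have := (Nat.find_spec h).1; omega⟩
  have hpred : Phi f m = f m - f (m + 1) := by
    simpa [hm] using Phi_apply_pred_of_ne_zero h h0
  rw [hm] at hε ⊢
  rw [show m + 1 + 1 = m + 2 by omega, mobComp_add _ m, mobComp_add _ m,
    mobComp_Phi_of_lt_find h (by omega)]
  congr 1
  simp only [mobComp, Nat.add_zero, Nat.zero_add, hpred, mob_mob_of_isUnit _ _ hε, addPt_infty]

lemma mobComp_Phi_of_ne_zero (h0 : f (Nat.find h) ≠ 0) (d : ℕ) (z : OnePoint ℝ) :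
    mobComp (Phi f) (Nat.find h + 1 + d) z = mobComp f (Nat.find h + 2 + d) z := by
  have hε : IsUnit (f (Nat.find h)) :=
    Int.isUnit_iff.mpr ((Nat.find_spec h).2.resolve_left h0)
  obtain ⟨m, hm⟩ : ∃ m, Nat.find h = m + 1 :=
    ⟨Nat.find h - 1, by have := (Nat.find_spec h).1; omega⟩
  have hpred : Phi f m = f m - f (m + 1) := by
    simpa [hm] using Phi_apply_pred_of_ne_zero h h0
  have hfind : Phi f (m + 1) = f (m + 2) - f (m + 1) := by
    simpa [hm] using Phi_apply_find_of_ne_zero h h0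
  have htail : (fun i => Phi f (m + (i + 1 + 1))) = fun i => f (m + (i + 1 + 1 + 1)) := by
    funext i
    rw [show m + (i + 1 + 1) = Nat.find h + 1 + i by omega, Phi_apply_add_of_ne_zero h h0]
    congr 1
    omega
  rw [hm] at hε ⊢
  rw [show m + 1 + 1 + d = m + (d + 2) by omega, show m + 1 + 2 + d = m + (d + 3) by omega,
    mobComp_add _ m, mobComp_add _ m, mobComp_Phi_of_lt_find h (by omega)]
  congr 1
  simp only [mobComp, Nat.add_zero, Nat.zero_add, htail, hpred, hfind,
    mob_mob_of_isUnit _ _ hε, addPt_mob, ← sub_eq_add_neg]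

end Singularization

open Classical in
noncomputable def phiIdx (f : ℕ → ℤ) (j : ℕ) : ℕ :=
  if h : ∃ m, badIdx f m then
    if j + 2 ≤ Nat.find h then j else if f (Nat.find h) = 0 then j + 2 else j + 1
  else j

lemma cfConv_Phi (f : ℕ → ℤ) (j : ℕ) : cfConv (Phi f) j = cfConv f (phiIdx f j) := by
  by_cases h : ∃ m, badIdx f m
  · rw [cfConv_eq_mobComp, cfConv_eq_mobComp, phiIdx, dif_pos h]
    split_ifs with hj h0
    · exact mobComp_Phi_of_lt_find h (by omega) ∞
    · convert mobComp_Phi_of_zero h h0 (j + 1 - Nat.find h) ∞ using 2 <;> omega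
    · rcases (show j + 1 = Nat.find h ∨ Nat.find h + 1 ≤ j + 1 by omega) with hj' | hj'
      · rw [hj']
        exact mobComp_Phi_infty_of_ne_zero h h0
      · convert mobComp_Phi_of_ne_zero h h0 (j - Nat.find h) ∞ using 2 <;> omega
  · rw [phiIdx, dif_neg h, Phi_of_not_exists_badIdx h]

lemma phiIdx_strictMono (f : ℕ → ℤ) : StrictMono (phiIdx f) := by
  refine strictMono_nat_of_lt_succ fun j => ?_
  unfold phiIdx
  split_ifs <;> omega

lemma lt_phiIdx {f : ℕ → ℤ} {j : ℕ} (hj : pIdx f ≤ j + 1) : j < phiIdx f j := by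
  by_cases h : ∃ m, badIdx f m
  · rw [pIdx_of_exists_badIdx h] at hj
    have : Nat.find h ≤ j + 1 := by exact_mod_cast hj
    rw [phiIdx, dif_pos h]
    split_ifs <;> omega
  · simp [pIdx_of_not_exists_badIdx h] at hj

noncomputable def convIdx (b : ℕ → ℤ) : ℕ → ℕ → ℕ
  | 0 => id
  | t + 1 => convIdx b t ∘ phiIdx (Phi^[t] b)

lemma convIdx_strictMono (b : ℕ → ℤ) (t : ℕ) : StrictMono (convIdx b t) := by
  induction t with
  | zero => exact strictMono_id
  | succ t ih => exact ih.comp (phiIdx_strictMono _)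

lemma cfConv_iterate_Phi (b : ℕ → ℤ) (t j : ℕ) :
    cfConv (Phi^[t] b) j = cfConv b (convIdx b t j) := by
  induction t generalizing j with
  | zero => rfl
  | succ t ih => rw [Function.iterate_succ_apply', cfConv_Phi, ih]; rfl

lemma tendsto_convIdx_atTop {b : ℕ → ℤ} {j : ℕ}
    (h : ∃ᶠ t in atTop, pIdx (Phi^[t] b) ≤ j + 1) :
    Tendsto (fun t => convIdx b t j) atTop atTop := by
  refine tendsto_atTop_of_monotone_of_frequently_lt_succ (monotone_nat_of_le_succ fun t => ?_)
    (h.mono fun t ht => convIdx_strictMono b t (lt_phiIdx ht))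
  exact (convIdx_strictMono b t).monotone ((phiIdx_strictMono _).id_le j)

lemma eq_of_frequently_cfConv_iterate_Phi_eq {b : ℕ → ℤ} {L x : OnePoint ℝ} {j : ℕ}
    (hL : Tendsto (cfConv b) atTop (𝓝 L)) (hj : ∃ᶠ t in atTop, pIdx (Phi^[t] b) ≤ j + 1)
    (hx : ∃ᶠ t in atTop, cfConv (Phi^[t] b) j = x) : L = x :=
  tendsto_nhds_unique_of_frequently_eq (hL.comp (tendsto_convIdx_atTop hj)) tendsto_const_nhds
    (hx.mono fun t ht => by rwa [cfConv_iterate_Phi] at ht)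

lemma liminf_pIdx_eq_pLim {b : ℕ → ℤ} (hp : ¬ PTendsToTop b) :
    liminf (fun n => pIdx (Phi^[n] b)) atTop = pLim b := by
  simp only [PTendsToTop, not_forall, not_exists, not_lt] at hp
  obtain ⟨N, hN⟩ := hp
  have hle : liminf (fun n => pIdx (Phi^[n] b)) atTop ≤ N :=
    liminf_le_of_frequently_le' (frequently_atTop.mpr fun M => by simpa using hN M)
  exact (ENat.natCast_toNat (ne_top_of_le_ne_top (ENat.natCast_ne_top N) hle)).symm

lemma Phi_iterate_apply_eq_of_le_pIdx {b : ℕ → ℤ} {k N t : ℕ} (hNt : N ≤ t)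
    (hk : ∀ n ≥ N, ((k + 2 : ℕ) : ℕ∞) ≤ pIdx (Phi^[n] b)) :
    Phi^[t] b k = Phi^[N] b k := by
  induction t, hNt using Nat.le_induction with
  | base => rfl
  | succ t hNt ih => rw [Function.iterate_succ_apply', Phi_apply_of_le_pIdx (hk t hNt), ih]

lemma mobComp_iterate_Phi_eq {b : ℕ → ℤ} {k N t : ℕ} (hNt : N ≤ t)
    (hk : ∀ n ≥ N, ((k + 1 : ℕ) : ℕ∞) ≤ pIdx (Phi^[n] b)) (z : OnePoint ℝ) :
    mobComp (Phi^[t] b) k z = mobComp (Phi^[N] b) k z :=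
  mobComp_congr (fun i hi => Phi_iterate_apply_eq_of_le_pIdx hNt
    fun n hn => (hk n hn).trans' (by exact_mod_cast (by omega : i + 2 ≤ k + 1))) z

lemma exists_frequently_coeffs_eq {b : ℕ → ℤ} (hp : ¬ PTendsToTop b)
    (hq : ¬ Tendsto (qSeq b) atTop atTop) :
    ∃ p N : ℕ, (∀ n ≥ N, ((p + 1 : ℕ) : ℕ∞) ≤ pIdx (Phi^[n] b)) ∧ ∃ v ε : ℤ,
      ∃ᶠ t in atTop, N ≤ t ∧ pIdx (Phi^[t] b) = ((p + 1 : ℕ) : ℕ∞) ∧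
        Phi^[t] b p = v ∧ Phi^[t] b (p + 1) = ε := by
  have hlim := liminf_pIdx_eq_pLim hp
  obtain ⟨N, hN⟩ := eventually_atTop.mp (eventually_le_of_liminf_eq_natCast hlim)
  have hsing := frequently_eq_of_liminf_eq_natCast hlim
  obtain ⟨p, hpLim⟩ : ∃ p, pLim b = p + 1 := by
    obtain ⟨t, ht⟩ := hsing.exists
    have : 1 ≤ pLim b := by exact_mod_cast ht ▸ one_le_pIdx (Phi^[t] b)
    exact ⟨pLim b - 1, by omega⟩
  rw [hpLim] at hN hsing
  obtain ⟨Q, hQ⟩ : ∃ Q, ∃ᶠ t in atTop, (Phi^[t] b p).natAbs < Q := by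
    simpa only [tendsto_atTop, not_forall, not_eventually, not_le, qSeq, hpLim,
      Nat.add_sub_cancel] using hq
  -- the coefficient at `p` can only change when `Phi` acts at position `p + 1`
  have hbounded := frequently_and_of_eq_succ_of_not (c := fun t => Phi^[t] b p)
    (B := fun x => x.natAbs < Q) hsing (eventually_atTop.mpr ⟨N, fun n hn hne => by
      rw [Function.iterate_succ_apply']
      exact Phi_apply_of_le_pIdx (ENat.natCast_add_one_le_iff.mpr
        (lt_of_le_of_ne (hN n hn) (Ne.symm hne)))⟩) hQ
  obtain ⟨⟨v, ε⟩, -, hvε⟩ : ∃ x ∈ Finset.Icc (-(Q : ℤ)) Q ×ˢ Finset.Icc (-1 : ℤ) 1,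
      ∃ᶠ t in atTop, N ≤ t ∧ pIdx (Phi^[t] b) = ((p + 1 : ℕ) : ℕ∞) ∧
        (Phi^[t] b p, Phi^[t] b (p + 1)) = x := by
    rw [← frequently_exists_finset]
    refine (hbounded.and_eventually (eventually_ge_atTop N)).mono
      fun t ⟨⟨hs, hQt⟩, hNt⟩ => ⟨_, ?_, hNt, hs, rfl⟩
    have := (badIdx_of_pIdx_eq hs).2
    simp only [Finset.mem_product, Finset.mem_Icc]
    omega
  exact ⟨p, N, hN, v, ε, hvε.mono fun t ⟨hNt, hs, hx⟩ => ⟨hNt, hs, Prod.mk.inj hx⟩⟩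

/-- **Theorem 1(ii)(b).** If `p⁽ⁿ⁾ ↛ ∞` and `q⁽ⁿ⁾ ↛ ∞`, then `[b₀, b₁, …]` diverges. -/
theorem stmt3 (b : ℕ → ℤ) (hp : ¬ PTendsToTop b)
    (hq : ¬ Filter.Tendsto (qSeq b) Filter.atTop Filter.atTop) :
    ¬ ∃ L : OnePoint ℝ, Filter.Tendsto (cfConv b) Filter.atTop (nhds L) := by
  rintro ⟨L, hL⟩
  obtain ⟨p, N, hN, v, ε, hvε⟩ := exists_frequently_coeffs_eq hp hq
  have hsing (j : ℕ) (hj : p ≤ j) : ∃ᶠ t in atTop, pIdx (Phi^[t] b) ≤ j + 1 :=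
    hvε.mono fun t ⟨_, hs, _⟩ => hs ▸ by exact_mod_cast (by omega : p + 1 ≤ j + 1)
  have hpred : L = mobComp (Phi^[N] b) p (mob v ∞) :=
    eq_of_frequently_cfConv_iterate_Phi_eq hL (hsing p le_rfl) (hvε.mono
      fun t ⟨hNt, _, hv, _⟩ => by
        rw [cfConv_eq_mobComp, mobComp_succ_right, mobComp_iterate_Phi_eq hNt hN, hv])
  have hcur : L = mobComp (Phi^[N] b) p (mob v (mob ε ∞)) :=
    eq_of_frequently_cfConv_iterate_Phi_eq hL (hsing (p + 1) (by omega)) (hvε.mono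
      fun t ⟨hNt, _, hv, hε⟩ => by
        rw [cfConv_eq_mobComp, mobComp_succ_right, mobComp_succ_right,
          mobComp_iterate_Phi_eq hNt hN, hv, hε])
  exact OnePoint.coe_ne_infty _
    (mob_injective v (mobComp_injective _ _ (hpred.symm.trans hcur))).symm
end

section
/- Let α and β be distinct points of ℝ∞ = ℝ ∪ {∞} that are not a pair of adjacent vertices of the Farey graph. Then there exist adjacent vertices u, v of the Farey graph, with u, v ∉ {α, β}, such that α and β lie in different connected components of ℝ∞ ∖ {u, v} (where ℝ∞ is topologized as the one-point compactification of ℝ, a circle). -/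
open Filter Topology OnePoint

/-!
For real `x < y`, take the fraction `p/q ∈ (x, y)` of least denominator. If `q = 1` the edge
`{p, ∞}` separates `x` from `y`. Otherwise `p/q` has Farey parents `a/b < p/q < c/d` with
`b + d = q`, so both parents lie outside `(x, y)`. They are Farey neighbours, so they are not
`x` and `y` simultaneously, and one of the edges `{a/b, p/q}`, `{p/q, c/d}` cuts the circle
between `x` and `y`. For `∞` against a non-integer `y`, the edge `{⌊y⌋, ⌊y⌋ + 1}` does.
-/

open Set

section Separation

variable {X : Type*} [TopologicalSpace X]

def SeparatedBy (u v α β : X) : Prop :=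
  α ∈ ({u, v}ᶜ : Set X) ∧ β ∈ ({u, v}ᶜ : Set X) ∧ β ∉ connectedComponentIn ({u, v}ᶜ : Set X) α

theorem SeparatedBy.symm {u v α β : X} (h : SeparatedBy u v α β) : SeparatedBy u v β α := by
  refine ⟨h.2.1, h.1, fun hα => h.2.2 ?_⟩
  rw [← connectedComponentIn_eq hα]
  exact mem_connectedComponentIn h.2.1

theorem separatedBy_of_isOpen {u v α β : X} {U W : Set X} (hU : IsOpen U) (hW : IsOpen W)
    (hUW : Disjoint U W) (hcov : ({u, v}ᶜ : Set X) ⊆ U ∪ W) (hα : α ∈ U \ {u, v})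
    (hβ : β ∈ W \ {u, v}) : SeparatedBy u v α β := by
  refine ⟨hα.2, hβ.2, fun hβα => ?_⟩
  rcases isPreconnected_connectedComponentIn.subset_or_subset hU hW hUW
    ((connectedComponentIn_subset _ _).trans hcov) with hsub | hsub
  · exact hUW.ne_of_mem (hsub hβα) hβ.1 rfl
  · exact hUW.ne_of_mem hα.1 (hsub (mem_connectedComponentIn hα.2)) rfl

end Separation

theorem separatedBy_coe_of_mem_Ioo {u v x : ℝ} (hx : x ∈ Ioo u v) {β : OnePoint ℝ}
    (hβ : β ∉ ((↑) '' Icc u v : Set (OnePoint ℝ))) :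
    SeparatedBy (u : OnePoint ℝ) v x β := by
  refine separatedBy_of_isOpen (isOpen_image_coe.2 isOpen_Ioo)
    (isOpen_compl_image_coe.2 ⟨isClosed_Icc, isCompact_Icc⟩)
    (disjoint_compl_right_iff_subset.2 (image_mono Ioo_subset_Icc_self)) ?_
    ⟨mem_image_of_mem _ hx, by simp [hx.1.ne', hx.2.ne]⟩ ⟨hβ, ?_⟩
  · intro z hz
    by_cases hzI : z ∈ ((↑) '' Icc u v : Set (OnePoint ℝ))
    · obtain ⟨t, ht, rfl⟩ := hzI
      simp only [mem_compl_iff, mem_insert_iff, mem_singleton_iff, coe_eq_coe, not_or] at hz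
      exact Or.inl ⟨t, ⟨ht.1.lt_of_ne' hz.1, ht.2.lt_of_ne hz.2⟩, rfl⟩
    · exact Or.inr hzI
  · have huv : u ≤ v := (hx.1.trans hx.2).le
    rintro (rfl | rfl)
    · exact hβ ⟨u, left_mem_Icc.2 huv, rfl⟩
    · exact hβ ⟨v, right_mem_Icc.2 huv, rfl⟩

theorem separatedBy_coe_infty {n x y : ℝ} (hx : x < n) (hy : n < y) :
    SeparatedBy (n : OnePoint ℝ) ∞ x y := by
  refine separatedBy_of_isOpen (isOpen_image_coe.2 isOpen_Iio) (isOpen_image_coe.2 isOpen_Ioi)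
    ((disjoint_image_iff coe_injective).2
      ((Iic_disjoint_Ioi le_rfl).mono_left Iio_subset_Iic_self)) ?_
    ⟨mem_image_of_mem _ hx, by simp [hx.ne]⟩ ⟨mem_image_of_mem _ hy, by simp [hy.ne']⟩
  intro z hz
  induction z using OnePoint.rec with
  | infty => simp at hz
  | coe t =>
    simp only [mem_compl_iff, mem_insert_iff, mem_singleton_iff, coe_eq_coe, not_or] at hz
    rcases lt_or_gt_of_ne hz.1 with h | h
    · exact Or.inl (mem_image_of_mem _ h)
    · exact Or.inr (mem_image_of_mem _ h)

theorem FareyAdj.symm {x y : OnePoint ℝ} (h : FareyAdj x y) : FareyAdj y x := by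
  obtain ⟨a, b, c, d, hx, hy, hdet⟩ := h
  exact ⟨c, d, a, b, hy, hx, by rcases hdet with h | h <;> [right; left] <;> linear_combination -h⟩

theorem fareyAdj_coe_div {a b c d : ℤ} (hb : b ≠ 0) (hd : d ≠ 0)
    (hdet : a * d - b * c = 1 ∨ a * d - b * c = -1) :
    FareyAdj ((a / b : ℝ) : OnePoint ℝ) ((c / d : ℝ) : OnePoint ℝ) :=
  ⟨a, b, c, d, by simp [intPt, hb], by simp [intPt, hd], hdet⟩

theorem fareyAdj_intCast_infty (n : ℤ) : FareyAdj ((n : ℝ) : OnePoint ℝ) ∞ :=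
  ⟨n, 1, 1, 0, by simp [intPt], by simp [intPt], Or.inr (by ring)⟩

theorem fareyAdj_intCast_add_one (n : ℤ) :
    FareyAdj ((n : ℝ) : OnePoint ℝ) ((n + 1 : ℝ) : OnePoint ℝ) :=
  ⟨n, 1, n + 1, 1, by simp [intPt], by simp [intPt], Or.inr (by ring)⟩

theorem exists_farey_parent {p q : ℤ} (hpq : IsCoprime p q) (hq : 2 ≤ q) :
    ∃ a b : ℤ, 0 < b ∧ b < q ∧ p * b - a * q = 1 := by
  obtain ⟨s, t, hst⟩ := hpq
  have hdet : p * (s % q) - (-t - p * (s / q)) * q = 1 := by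
    linear_combination hst + p * Int.emod_add_mul_ediv s q
  refine ⟨_, s % q, (Int.emod_nonneg s (by omega)).lt_of_ne fun h0 => ?_,
    Int.emod_lt_of_pos s (by omega), hdet⟩
  have : q ∣ 1 := ⟨t + p * (s / q), by rw [← h0] at hdet; linear_combination -hdet⟩
  have := Int.le_of_dvd one_pos this
  omega

theorem exists_div_mem_Ioo_min_den {x y : ℝ} (hxy : x < y) :
    ∃ p q : ℤ, 0 < q ∧ IsCoprime p q ∧ x < p / q ∧ (p / q : ℝ) < y ∧
      ∀ a b : ℤ, 0 < b → x < a / b → (a / b : ℝ) < y → q ≤ b := by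
  classical
  have hex : ∃ k, ∃ r : ℚ, x < r ∧ (r : ℝ) < y ∧ r.den = k :=
    let ⟨r, hxr, hry⟩ := exists_rat_btwn hxy
    ⟨_, r, hxr, hry, rfl⟩
  obtain ⟨r, hxr, hry, hr⟩ := Nat.find_spec hex
  rw [Rat.cast_def] at hxr hry
  refine ⟨r.num, r.den, by positivity, r.isCoprime_num_den, hxr, hry, fun a b hb hxab haby => ?_⟩
  have hden : (((a / b : ℚ)).den : ℤ) ≤ b :=
    Int.le_of_dvd hb (by simpa [Rat.divInt_eq_div] using Rat.den_dvd a b)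
  have hmin :=
    Nat.find_min' hex ⟨(a / b : ℚ), by push_cast; exact hxab, by push_cast; exact haby, rfl⟩
  omega

theorem exists_fareyAdj_separatedBy_of_lt {x y : ℝ} (hxy : x < y)
    (hadj : ¬ FareyAdj (x : OnePoint ℝ) y) :
    ∃ u v : OnePoint ℝ, FareyAdj u v ∧ SeparatedBy u v (x : OnePoint ℝ) y := by
  obtain ⟨p, q, hq, hpq, hxr, hry, hmin⟩ := exists_div_mem_Ioo_min_den hxy
  obtain rfl | hq2 : q = 1 ∨ 2 ≤ q := by omega
  · rw [Int.cast_one, div_one] at hxr hry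
    exact ⟨_, _, fareyAdj_intCast_infty p, separatedBy_coe_infty hxr hry⟩
  obtain ⟨a, b, hb, hbq, hdet⟩ := exists_farey_parent hpq hq2
  have hd : 0 < q - b := by omega
  have hab : (a / b : ℝ) < p / q := by
    rw [div_lt_div_iff₀ (by exact_mod_cast hb) (by exact_mod_cast hq)]
    exact_mod_cast (by linarith : a * q < p * b)
  have hcd : (p / q : ℝ) < ((p - a : ℤ) / (q - b : ℤ) : ℝ) := by
    rw [div_lt_div_iff₀ (by exact_mod_cast hq) (by exact_mod_cast hd)]
    exact_mod_cast (by linarith : p * (q - b) < (p - a) * q)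
  have hax : (a / b : ℝ) ≤ x := not_lt.1 fun h => by
    have := hmin a b hb h (hab.trans hry)
    omega
  have hyc : y ≤ ((p - a : ℤ) / (q - b : ℤ) : ℝ) := not_lt.1 fun h => by
    have := hmin _ _ hd (hxr.trans hcd) h
    omega
  rcases hax.lt_or_eq with hax | rfl
  · refine ⟨_, _, fareyAdj_coe_div hb.ne' hq.ne' (Or.inr (by linear_combination -hdet)),
      separatedBy_coe_of_mem_Ioo ⟨hax, hxr⟩ ?_⟩
    exact coe_injective.mem_set_image.not.2 fun h => (mem_Icc.1 h).2.not_gt hry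
  · have hyc' : y < ((p - a : ℤ) / (q - b : ℤ) : ℝ) := hyc.lt_of_ne fun h =>
      hadj (h ▸ fareyAdj_coe_div hb.ne' hd.ne' (Or.inr (by linear_combination -hdet)))
    refine ⟨_, _, fareyAdj_coe_div hq.ne' hd.ne' (Or.inr (by linear_combination -hdet)),
      (separatedBy_coe_of_mem_Ioo ⟨hry, hyc'⟩ ?_).symm⟩
    exact coe_injective.mem_set_image.not.2 fun h => (mem_Icc.1 h).1.not_gt hab

theorem exists_fareyAdj_separatedBy_infty {y : ℝ} (hadj : ¬ FareyAdj ∞ (y : OnePoint ℝ)) :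
    ∃ u v : OnePoint ℝ, FareyAdj u v ∧ SeparatedBy u v ∞ y := by
  have hy : (⌊y⌋ : ℝ) < y :=
    (Int.floor_le y).lt_of_ne fun h => hadj (h ▸ (fareyAdj_intCast_infty ⌊y⌋).symm)
  exact ⟨_, _, fareyAdj_intCast_add_one ⌊y⌋,
    (separatedBy_coe_of_mem_Ioo ⟨hy, Int.lt_floor_add_one y⟩ infty_notMem_image_coe).symm⟩

theorem exists_fareyAdj_separatedBy {α β : OnePoint ℝ} (hne : α ≠ β) (hadj : ¬ FareyAdj α β) :
    ∃ u v : OnePoint ℝ, FareyAdj u v ∧ SeparatedBy u v α β := by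
  have swap : (∃ u v : OnePoint ℝ, FareyAdj u v ∧ SeparatedBy u v β α) →
      ∃ u v : OnePoint ℝ, FareyAdj u v ∧ SeparatedBy u v α β :=
    fun ⟨u, v, huv, hsep⟩ => ⟨u, v, huv, hsep.symm⟩
  induction α using OnePoint.rec with
  | infty =>
    induction β using OnePoint.rec with
    | infty => exact absurd rfl hne
    | coe y => exact exists_fareyAdj_separatedBy_infty hadj
  | coe x =>
    induction β using OnePoint.rec with
    | infty => exact swap (exists_fareyAdj_separatedBy_infty fun h => hadj h.symm)
    | coe y =>
      rcases lt_trichotomy x y with hxy | rfl | hyx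
      · exact exists_fareyAdj_separatedBy_of_lt hxy hadj
      · exact absurd rfl hne
      · exact swap (exists_fareyAdj_separatedBy_of_lt hyx fun h => hadj h.symm)

/-- **Lemma 2.** If `α, β ∈ ℝ∞` are distinct and not a pair of adjacent vertices of the
Farey graph, then there is an edge `{u, v}` of the Farey graph, avoiding `α` and `β`,
that separates `α` from `β` on the circle `ℝ∞`. -/
theorem stmt8 (α β : OnePoint ℝ) (hne : α ≠ β) (hnadj : ¬ FareyAdj α β) :
    ∃ u v : OnePoint ℝ, FareyAdj u v ∧ u ≠ α ∧ u ≠ β ∧ v ≠ α ∧ v ≠ β ∧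
      α ∈ ({u, v}ᶜ : Set (OnePoint ℝ)) ∧ β ∈ ({u, v}ᶜ : Set (OnePoint ℝ)) ∧
      β ∉ connectedComponentIn ({u, v}ᶜ : Set (OnePoint ℝ)) α := by
  obtain ⟨u, v, huv, hα, hβ, hsep⟩ := exists_fareyAdj_separatedBy hne hnadj
  have hα' : α ≠ u ∧ α ≠ v := by simpa [not_or] using hα
  have hβ' : β ≠ u ∧ β ≠ v := by simpa [not_or] using hβ
  exact ⟨u, v, huv, hα'.1.symm, hβ'.1.symm, hα'.2.symm, hβ'.2.symm, hα, hβ, hsep⟩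
end
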